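/- arXiv:2206.15245 — 3 statements merged into one kernel-verified Lean document; each statement's English description precedes it below -/
import Mathlib

section
/- For all real numbers a > 0, b > 0 and every t > 0, the function t ↦ t^b · E_{a,b+1}(−t^a) is differentiable at t with derivative t^{b−1} · E_{a,b}(−t^a); that is, d/dt ( t^b E_{a,b+1}(−t^a) ) = t^{b−1} E_{a,b}(−t^a). -/
open Real MeasureTheory Set Filter

lemma gamma_gautschi {a y : ℝ} (ha : 0 < a) (hy : 0 < y) :
    Real.Gamma y * y ^ (a + 1) / (y + a) ≤ Real.Gamma (y + a) := by
  have hya : 0 < y + a := by positivity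
  have ha1 : (0:ℝ) < a + 1 := by linarith
  have hGy : 0 < Real.Gamma y := Real.Gamma_pos_of_pos hy
  have hGya : 0 < Real.Gamma (y + a) := Real.Gamma_pos_of_pos hya
  have hc := Real.convexOn_log_Gamma.2 (Set.mem_Ioi.mpr hy)
      (Set.mem_Ioi.mpr (by linarith : (0:ℝ) < y + a + 1))
      (by positivity : (0:ℝ) ≤ a / (a+1)) (by positivity : (0:ℝ) ≤ 1/(a+1))
      (by field_simp)
  have hpt : (a/(a+1)) • y + (1/(a+1)) • (y + a + 1) = y + 1 := by
    rw [smul_eq_mul, smul_eq_mul, div_mul_eq_mul_div, div_mul_eq_mul_div, ← add_div,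
      div_eq_iff ha1.ne']
    ring
  rw [hpt] at hc
  simp only [Function.comp_apply, smul_eq_mul] at hc
  rw [Real.Gamma_add_one hy.ne', Real.Gamma_add_one hya.ne',
    Real.log_mul hy.ne' hGy.ne', Real.log_mul hya.ne' hGya.ne'] at hc
  have hc2 := mul_le_mul_of_nonneg_left hc ha1.le
  have hrw : (a+1) * (a/(a+1) * Real.log (Real.Gamma y)
      + 1/(a+1) * (Real.log (y+a) + Real.log (Real.Gamma (y+a))))
      = a * Real.log (Real.Gamma y) + Real.log (y+a) + Real.log (Real.Gamma (y+a)) := by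
    field_simp
    ring
  rw [hrw] at hc2
  have key : Real.log (Real.Gamma y * y ^ (a+1) / (y + a)) ≤ Real.log (Real.Gamma (y + a)) := by
    rw [Real.log_div (by positivity) hya.ne',
      Real.log_mul hGy.ne' (by positivity : (y:ℝ)^(a+1) ≠ 0), Real.log_rpow hy]
    nlinarith [hc2]
  calc Real.Gamma y * y ^ (a+1) / (y+a)
      = Real.exp (Real.log (Real.Gamma y * y ^ (a+1) / (y+a))) :=
        (Real.exp_log (by positivity)).symm
    _ ≤ Real.exp (Real.log (Real.Gamma (y+a))) := Real.exp_le_exp.mpr key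
    _ = _ := Real.exp_log hGya

lemma summable_ml {a b : ℝ} (ha : 0 < a) (hb : 0 < b) (x : ℝ) (hx : 0 ≤ x) :
    Summable (fun k : ℕ => x ^ k / Real.Gamma (a * k + b)) := by
  apply summable_of_ratio_norm_eventually_le (r := 1/2) (by norm_num)
  have htend : Tendsto (fun k : ℕ => a * k + b) atTop atTop := by
    apply Filter.tendsto_atTop_add_const_right
    exact (tendsto_natCast_atTop_atTop).const_mul_atTop ha
  filter_upwards [htend.eventually_ge_atTop (max a ((4 * x + 1) ^ a⁻¹))] with k hk
  set y := a * (k:ℝ) + b with hy_def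
  have hy : 0 < y := by positivity
  have hya : 0 < y + a := by positivity
  have hGy : 0 < Real.Gamma y := Real.Gamma_pos_of_pos hy
  have hGya : 0 < Real.Gamma (y + a) := Real.Gamma_pos_of_pos hya
  have hay : a ≤ y := le_trans (le_max_left _ _) hk
  have hxy : 4 * x + 1 ≤ y ^ a := by
    have h1 : (4 * x + 1) ^ a⁻¹ ≤ y := le_trans (le_max_right _ _) hk
    calc 4 * x + 1 = ((4 * x + 1) ^ a⁻¹) ^ a :=
          (Real.rpow_inv_rpow (by positivity) ha.ne').symm
      _ ≤ y ^ a := Real.rpow_le_rpow (by positivity) h1 ha.le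
  have key : x * Real.Gamma y ≤ 1/2 * Real.Gamma (y + a) := by
    have g1 := gamma_gautschi ha hy
    have g1' : Real.Gamma y * y ^ (a+1) ≤ Real.Gamma (y+a) * (y+a) :=
      (div_le_iff₀ hya).mp g1
    have g2 : y ^ (a+1) = y ^ a * y := by
      rw [Real.rpow_add hy, Real.rpow_one]
    rw [g2] at g1'
    nlinarith [mul_le_mul_of_nonneg_right hxy (mul_pos hGy hy).le,
      mul_le_mul_of_nonneg_left (show y + a ≤ 2*y by linarith) hGya.le,
      mul_pos hGy hy]
  have harg : a * (((k:ℕ)+1 : ℕ) : ℝ) + b = y + a := by push_cast; ring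
  rw [harg, Real.norm_eq_abs, Real.norm_eq_abs, abs_div, abs_div,
    abs_of_nonneg (pow_nonneg hx _), abs_of_nonneg (pow_nonneg hx _),
    abs_of_pos hGya, abs_of_pos hGy, mul_div_assoc' (1/2), div_le_div_iff₀ hGya hGy,
    pow_succ]
  nlinarith [mul_le_mul_of_nonneg_left key (pow_nonneg hx k)]

/-- The generalized Mittag-Leffler function `E_{a,b}(x) = ∑ₖ xᵏ / Γ(a k + b)`. -/
noncomputable def mittagLeffler (a b x : ℝ) : ℝ :=
  ∑' k : ℕ, x ^ k / Real.Gamma (a * k + b)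

/-- For `a > 0`, `b > 0` and `t > 0`, the function `t ↦ t^b E_{a,b+1}(−t^a)` is
differentiable at `t` with derivative `t^{b−1} E_{a,b}(−t^a)`. -/
theorem deriv_rpow_mul_mittagLeffler (a b : ℝ) (ha : 0 < a) (hb : 0 < b)
    (t : ℝ) (ht : 0 < t) :
    HasDerivAt (fun s : ℝ => s ^ b * mittagLeffler a (b + 1) (-(s ^ a)))
      (t ^ (b - 1) * mittagLeffler a b (-(t ^ a))) t := by
  have ht2 : (0:ℝ) < t/2 := by linarith
  have htS : t ∈ Ioo (t/2) (2*t) := ⟨by linarith, by linarith⟩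
  have hpow : ∀ (s : ℝ), 0 < s → ∀ (c : ℝ) (k : ℕ), s ^ (a * k + c) = (s^a)^k * s^c := by
    intro s hs c k
    rw [Real.rpow_add hs, Real.rpow_mul hs.le, Real.rpow_natCast]
  have hpos : ∀ k : ℕ, (0:ℝ) < a * k + b := fun k => by positivity
  set C : ℝ := max ((2*t) ^ (b-1)) ((t/2) ^ (b-1)) with hC
  have hu : Summable (fun k : ℕ => C * (((2*t)^a)^k / Real.Gamma (a*k+b))) :=
    (summable_ml ha hb ((2*t)^a) (by positivity)).mul_left C
  have hg : ∀ (k:ℕ) (s : ℝ), s ∈ Ioo (t/2) (2*t) → HasDerivAt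
      (fun s : ℝ => ((-1):ℝ)^k / Real.Gamma (a*k+b+1) * s ^ (a*k+b))
      (((-1):ℝ)^k / Real.Gamma (a*k+b) * s ^ (a*k+b-1)) s := by
    intro k s hs
    have hs0 : 0 < s := lt_trans ht2 hs.1
    have h := (Real.hasDerivAt_rpow_const (x := s) (p := a*k+b) (Or.inl hs0.ne')).const_mul
      (((-1):ℝ)^k / Real.Gamma (a*k+b+1))
    refine h.congr_deriv ?_
    rw [Real.Gamma_add_one (hpos k).ne']
    have h1 : (a*(k:ℝ)+b) ≠ 0 := (hpos k).ne'
    have h2 : Real.Gamma (a*(k:ℝ)+b) ≠ 0 := (Real.Gamma_pos_of_pos (hpos k)).ne'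
    field_simp
  have hg' : ∀ (k:ℕ) (s:ℝ), s ∈ Ioo (t/2) (2*t) →
      ‖((-1):ℝ)^k / Real.Gamma (a*k+b) * s ^ (a*k+b-1)‖
        ≤ C * (((2*t)^a)^k / Real.Gamma (a*k+b)) := by
    intro k s hs
    have hs0 : 0 < s := lt_trans ht2 hs.1
    have hGk : 0 < Real.Gamma (a*k+b) := Real.Gamma_pos_of_pos (hpos k)
    have h1 : ‖((-1):ℝ)^k / Real.Gamma (a*k+b) * s ^ (a*k+b-1)‖
        = s ^ (a*k+b-1) / Real.Gamma (a*k+b) := by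
      rw [norm_mul, norm_div, norm_pow, norm_neg, norm_one, one_pow, Real.norm_eq_abs,
        Real.norm_eq_abs, abs_of_pos hGk, abs_of_pos (Real.rpow_pos_of_pos hs0 _)]
      ring
    rw [h1, show a*(k:ℝ)+b-1 = a*(k:ℝ)+(b-1) from by ring, hpow s hs0 (b-1) k,
      mul_div_assoc']
    refine (div_le_div_iff_of_pos_right hGk).mpr ?_
    have h3 : (s^a)^k ≤ ((2*t)^a)^k :=
      pow_le_pow_left₀ (Real.rpow_nonneg hs0.le a)
        (Real.rpow_le_rpow hs0.le hs.2.le ha.le) k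
    have h4 : s ^ (b-1) ≤ C := by
      rcases le_or_gt 0 (b-1) with h | h
      · exact le_trans (Real.rpow_le_rpow hs0.le hs.2.le h) (le_max_left _ _)
      · exact le_trans (Real.rpow_le_rpow_of_nonpos ht2 hs.1.le h.le) (le_max_right _ _)
    calc (s^a)^k * s^(b-1) ≤ ((2*t)^a)^k * C :=
          mul_le_mul h3 h4 (Real.rpow_nonneg hs0.le _) (pow_nonneg (by positivity) k)
      _ = C * ((2*t)^a)^k := mul_comm _ _
  have hg0 : Summable (fun k : ℕ =>
      ((-1):ℝ)^k / Real.Gamma (a*k+b+1) * t ^ (a*k+b)) := by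
    apply Summable.of_norm
    have : (fun k : ℕ => ‖((-1):ℝ)^k / Real.Gamma (a*k+b+1) * t ^ (a*k+b)‖)
        = fun k : ℕ => t^b * ((t^a)^k / Real.Gamma (a*k+(b+1))) := by
      funext k
      have hG1 : 0 < Real.Gamma (a*k+b+1) := Real.Gamma_pos_of_pos (by positivity)
      rw [norm_mul, norm_div, norm_pow, norm_neg, norm_one, one_pow, Real.norm_eq_abs,
        Real.norm_eq_abs, abs_of_pos hG1, abs_of_pos (Real.rpow_pos_of_pos ht _),
        hpow t ht b k, show a*(k:ℝ)+(b+1) = a*k+b+1 from by ring]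
      ring
    rw [this]
    exact (summable_ml ha (by linarith) (t^a) (Real.rpow_nonneg ht.le a)).mul_left _
  have hF := hasDerivAt_tsum_of_isPreconnected hu isOpen_Ioo
    ((convex_Ioo _ _).isPreconnected) hg hg' htS hg0 htS
  have heq : (fun s : ℝ => s ^ b * mittagLeffler a (b + 1) (-(s ^ a)))
      =ᶠ[nhds t] (fun z : ℝ => ∑' k : ℕ, ((-1):ℝ)^k / Real.Gamma (a*k+b+1) * z ^ (a*k+b)) := by
    filter_upwards [isOpen_Ioi.eventually_mem (Set.mem_Ioi.mpr ht)] with s hs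
    have hs0 : (0:ℝ) < s := hs
    rw [mittagLeffler, ← tsum_mul_left]
    refine tsum_congr fun k => ?_
    rw [hpow s hs0 b k, neg_pow, show a*(k:ℝ)+(b+1) = a*k+b+1 from by ring]
    ring
  have hD : (∑' k : ℕ, ((-1):ℝ)^k / Real.Gamma (a*k+b) * t ^ (a*k+b-1))
      = t ^ (b-1) * mittagLeffler a b (-(t^a)) := by
    rw [mittagLeffler, ← tsum_mul_left]
    refine tsum_congr fun k => ?_
    rw [show a*(k:ℝ)+b-1 = a*(k:ℝ)+(b-1) from by ring, hpow t ht (b-1) k, neg_pow]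
    ring
  exact hD ▸ hF.congr_of_eventuallyEq heq
end

section
/- Let K : (0,∞) → ℝ be locally integrable, completely monotone, nonconstant, and positive almost everywhere. Let A ≥ 0 and let f : (0,∞) → ℝ be completely monotone and locally integrable such that A·K(t) + ∫_0^t K(t−s) f(s) ds = 1 for every t > 0. Then f(t) > 0 for every t ∈ (0,∞). -/
open Real MeasureTheory Set Filter

/-- A function `g : (0,∞) → ℝ` is completely monotone if it is infinitely differentiable
on `(0,∞)` and `(−1)ⁿ g⁽ⁿ⁾(t) ≥ 0` for all `n ≥ 0` and `t > 0`. -/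
def CompletelyMonotoneOn (g : ℝ → ℝ) : Prop :=
  ContDiffOn ℝ (⊤ : ℕ∞) g (Set.Ioi 0) ∧
    ∀ (n : ℕ), ∀ t ∈ Set.Ioi (0 : ℝ),
      0 ≤ (-1 : ℝ) ^ n * iteratedDerivWithin n g (Set.Ioi 0) t

private lemma cm_nonneg {g : ℝ → ℝ} (h : CompletelyMonotoneOn g) :
    ∀ t ∈ Set.Ioi (0 : ℝ), 0 ≤ g t := by
  intro t ht
  simpa [iteratedDerivWithin_zero] using h.2 0 t ht

private lemma cm_anti {g : ℝ → ℝ} (h : CompletelyMonotoneOn g) :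
    AntitoneOn g (Set.Ioi 0) := by
  have hd : DifferentiableOn ℝ g (Set.Ioi 0) := h.1.differentiableOn (by simp)
  apply antitoneOn_of_deriv_nonpos (convex_Ioi 0) h.1.continuousOn
  · rwa [interior_Ioi]
  · intro x hx
    rw [interior_Ioi] at hx
    have h2 := h.2 1 x hx
    rw [pow_one, neg_one_mul, neg_nonneg,
      iteratedDerivWithin_one,
      derivWithin_of_isOpen isOpen_Ioi hx] at h2
    exact h2

/-- If `K` is locally integrable, completely monotone, nonconstant and a.e. positive on
`(0,∞)`, and `A δ₀ + f` (with `A ≥ 0`, `f` completely monotone locally integrable) is a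
resolvent of the first kind of `K`, i.e. `A K(t) + ∫₀ᵗ K(t−s) f(s) ds = 1` for all
`t > 0`, then `f(t) > 0` for every `t > 0`. -/
theorem resolvent_part_positive
    (K f : ℝ → ℝ)
    (hKloc : ∀ T > (0 : ℝ), IntegrableOn K (Set.Ioc 0 T))
    (hKcm : CompletelyMonotoneOn K)
    (hKnonconst : ∃ s ∈ Set.Ioi (0 : ℝ), ∃ t ∈ Set.Ioi (0 : ℝ), K s ≠ K t)
    (hKpos : ∀ᵐ t : ℝ, t ∈ Set.Ioi (0 : ℝ) → 0 < K t)
    (A : ℝ) (hA : 0 ≤ A)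
    (hfcm : CompletelyMonotoneOn f)
    (hfloc : ∀ T > (0 : ℝ), IntegrableOn f (Set.Ioc 0 T))
    (hres : ∀ t > (0 : ℝ), A * K t + ∫ s in (0 : ℝ)..t, K (t - s) * f s = 1) :
    ∀ t ∈ Set.Ioi (0 : ℝ), 0 < f t := by
  have hKnn := cm_nonneg hKcm
  have hfnn := cm_nonneg hfcm
  have hKanti := cm_anti hKcm
  have hfanti := cm_anti hfcm
  have hKcont : ContinuousOn K (Set.Ioi 0) := hKcm.1.continuousOn
  have hfcont : ContinuousOn f (Set.Ioi 0) := hfcm.1.continuousOn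
  obtain ⟨p, q, hp, hq, hpq, hKpq⟩ :
      ∃ p q : ℝ, 0 < p ∧ 0 < q ∧ p < q ∧ K q < K p := by
    obtain ⟨s, hs, t, ht, hne⟩ := hKnonconst
    rcases lt_trichotomy s t with h | h | h
    · exact ⟨s, t, hs, ht, h, lt_of_le_of_ne (hKanti hs ht h.le) hne.symm⟩
    · exact absurd (by rw [h]) hne
    · exact ⟨t, s, ht, hs, h, lt_of_le_of_ne (hKanti ht hs h.le) hne⟩
  intro t0 ht0
  by_contra hft0
  push_neg at hft0
  have hft0' : f t0 = 0 := le_antisymm hft0 (hfnn t0 ht0)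
  rw [Set.mem_Ioi] at ht0
  by_cases hall : ∀ u ∈ Set.Ioi (0 : ℝ), f u = 0
  · -- f ≡ 0 on (0,∞), so A K = 1 everywhere, contradicting nonconstancy
    have hzero : ∀ r > (0 : ℝ), A * K r = 1 := by
      intro r hr
      have h1 := hres r hr
      rw [intervalIntegral.integral_of_le hr.le,
        MeasureTheory.setIntegral_congr_fun measurableSet_Ioc
          (show Set.EqOn (fun s => K (r - s) * f s) (fun _ => (0 : ℝ)) (Set.Ioc 0 r) from
            fun s hs => by simp [hall s hs.1])] at h1
      simpa using h1
    have e1 := hzero p hp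
    have e2 := hzero q hq
    rcases hA.eq_or_lt with h | h
    · rw [← h] at e1; simp at e1
    · exact absurd (mul_left_cancel₀ h.ne' (e1.trans e2.symm)) hKpq.ne'
  · push_neg at hall
    obtain ⟨b, hb, hfb⟩ := hall
    rw [Set.mem_Ioi] at hb
    have hfb' : 0 < f b := (hfnn b hb).lt_of_ne (Ne.symm hfb)
    set Z : Set ℝ := {u | 0 < u ∧ f u = 0} with hZdef
    have hZne : t0 ∈ Z := ⟨ht0, hft0'⟩
    have hZbdd : BddBelow Z := ⟨0, fun z hz => hz.1.le⟩
    set a := sInf Z with hadef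
    have hba : b ≤ a := by
      apply le_csInf ⟨t0, hZne⟩
      intro z hz
      by_contra hzb
      push_neg at hzb
      have h1 := hfanti (Set.mem_Ioi.mpr hz.1) (Set.mem_Ioi.mpr hb) hzb.le
      rw [hz.2] at h1
      linarith
    have ha0 : 0 < a := lt_of_lt_of_le hb hba
    have hfz : ∀ u, a < u → f u = 0 := by
      intro u hu
      obtain ⟨z, hzZ, hzu⟩ := exists_lt_of_csInf_lt ⟨t0, hZne⟩ hu
      have hz0 := hzZ.1
      have h1 := hfanti (Set.mem_Ioi.mpr hz0) (Set.mem_Ioi.mpr (hz0.trans hzu)) hzu.le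
      rw [hzZ.2] at h1
      exact le_antisymm h1 (hfnn u (Set.mem_Ioi.mpr (hz0.trans hzu)))
    have hfpos : ∀ u, 0 < u → u < a → 0 < f u := by
      intro u hu hua
      rcases (hfnn u (Set.mem_Ioi.mpr hu)).lt_or_eq with h | h
      · exact h
      · exact absurd (csInf_le hZbdd ⟨hu, h.symm⟩) (not_le.mpr hua)
    -- integrability of the convolution integrand on (0, a]
    have key : ∀ r, a < r → IntegrableOn (fun s => K (r - s) * f s) (Set.Ioc 0 a) := by
      intro r hr
      have hra : (0 : ℝ) < r - a := by linarith
      have hmeas : ContinuousOn (fun s => K (r - s) * f s) (Set.Ioc 0 a) := by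
        apply ContinuousOn.mul
        · apply hKcont.comp ((continuous_const.sub continuous_id).continuousOn)
          intro s hs
          exact Set.mem_Ioi.mpr (by show (0:ℝ) < r - s; linarith [hs.2])
        · exact hfcont.mono (fun s hs => hs.1)
      apply Integrable.mono' ((hfloc a ha0).const_mul (K (r - a)))
        (hmeas.aestronglyMeasurable measurableSet_Ioc)
      rw [ae_restrict_iff' measurableSet_Ioc]
      filter_upwards with s hs
      have hs0 := hs.1
      have hrs : (0 : ℝ) < r - s := by linarith [hs.2]
      rw [Real.norm_eq_abs, abs_of_nonneg (mul_nonneg (hKnn _ (Set.mem_Ioi.mpr hrs)) (hfnn _ (Set.mem_Ioi.mpr hs0)))]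
      exact mul_le_mul_of_nonneg_right
        (hKanti (Set.mem_Ioi.mpr hra) (Set.mem_Ioi.mpr hrs) (by linarith [hs.2]))
        (hfnn _ (Set.mem_Ioi.mpr hs0))
    -- the convolution integral reduces to (0, a]
    have hsplit : ∀ r, a < r → (∫ s in (0 : ℝ)..r, K (r - s) * f s)
        = ∫ s in Set.Ioc 0 a, K (r - s) * f s := by
      intro r hr
      have h0r : (0 : ℝ) ≤ r := by linarith
      have hEq : Set.EqOn (fun s => K (r - s) * f s) (fun _ => (0 : ℝ)) (Set.Ioc a r) :=
        fun s hs => by simp [hfz s hs.1]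
      have hint2 : IntegrableOn (fun s => K (r - s) * f s) (Set.Ioc a r) :=
        (integrableOn_congr_fun hEq measurableSet_Ioc).mpr integrableOn_zero
      rw [intervalIntegral.integral_of_le h0r, ← Set.Ioc_union_Ioc_eq_Ioc ha0.le hr.le,
        MeasureTheory.setIntegral_union (Set.Ioc_disjoint_Ioc_of_le le_rfl) measurableSet_Ioc
          (key r hr) hint2,
        MeasureTheory.setIntegral_congr_fun measurableSet_Ioc hEq]
      simp
    set t1 := a + p with ht1def
    set t2 := a + q with ht2def
    have hat1 : a < t1 := by simp [ht1def]; linarith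
    have hat2 : a < t2 := by simp [ht2def]; linarith
    have ht1p : (0 : ℝ) < t1 := by simp [ht1def]; linarith
    have ht2p : (0 : ℝ) < t2 := by simp [ht2def]; linarith
    have e1 := hres t1 ht1p
    rw [hsplit t1 hat1] at e1
    have e2 := hres t2 ht2p
    rw [hsplit t2 hat2] at e2
    have hAK : A * K t2 ≤ A * K t1 :=
      mul_le_mul_of_nonneg_left
        (hKanti (Set.mem_Ioi.mpr ht1p) (Set.mem_Ioi.mpr ht2p) (by simp [ht1def, ht2def]; linarith))
        hA
    have hdiff : (∫ s in Set.Ioc 0 a, K (t1 - s) * f s) - ∫ s in Set.Ioc 0 a, K (t2 - s) * f s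
        = ∫ s in Set.Ioc 0 a, (K (t1 - s) - K (t2 - s)) * f s := by
      rw [← MeasureTheory.integral_sub (key t1 hat1) (key t2 hat2)]
      congr 1
      funext s
      ring
    -- strict positivity of the difference integral
    set ε := (K p - K q) / 2 with hεdef
    have hε0 : 0 < ε := by simp [hεdef]; linarith
    obtain ⟨δ, hδ, hball⟩ :
        ∃ δ > 0, ∀ s, |s - a| < δ → ε < K (t1 - s) - K (t2 - s) := by
      have ea : t1 - a = p := by simp [ht1def]
      have eb : t2 - a = q := by simp [ht2def]
      have hc1 : ContinuousAt (fun s => K (t1 - s) - K (t2 - s)) a := by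
        apply ContinuousAt.sub
        · have hKp : ContinuousAt K (t1 - a) := by
            rw [ea]; exact hKcont.continuousAt (Ioi_mem_nhds hp)
          exact hKp.comp ((continuous_const.sub continuous_id).continuousAt)
        · have hKq : ContinuousAt K (t2 - a) := by
            rw [eb]; exact hKcont.continuousAt (Ioi_mem_nhds hq)
          exact hKq.comp ((continuous_const.sub continuous_id).continuousAt)
      have hεa : ε < K (t1 - a) - K (t2 - a) := by rw [ea, eb]; simp [hεdef]; linarith
      have hnh := hc1.preimage_mem_nhds (Ioi_mem_nhds hεa)
      rw [Metric.mem_nhds_iff] at hnh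
      obtain ⟨δ, hδ, hsub⟩ := hnh
      exact ⟨δ, hδ, fun s hs => hsub (by rwa [Metric.mem_ball, Real.dist_eq])⟩
    set m := min δ a with hmdef
    have hm0 : 0 < m := lt_min hδ ha0
    have hma : m ≤ a := min_le_right _ _
    have hmδ : m ≤ δ := min_le_left _ _
    set c := a - m / 2 with hcdef
    set d := a - m / 4 with hddef
    have hc0 : 0 < c := by simp [hcdef]; linarith
    have hcd : c < d := by simp [hcdef, hddef]; linarith
    have hda : d < a := by simp [hddef]; linarith
    have hfd : 0 < f d := hfpos d (by linarith) hda
    have hlow : ∀ s ∈ Set.Ioc c d, ε * f d ≤ (K (t1 - s) - K (t2 - s)) * f s := by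
      intro s hs
      have hs1 : c < s := hs.1
      have hs2 : s ≤ d := hs.2
      have hsa : |s - a| < δ := by
        rw [abs_lt]
        constructor <;> simp [hcdef, hddef] at hs1 hs2 <;> [linarith; linarith]
      have h1 := hball s hsa
      have hspos : (0 : ℝ) < s := by simp [hcdef] at hs1; linarith
      have h2 : f d ≤ f s :=
        hfanti (Set.mem_Ioi.mpr hspos) (Set.mem_Ioi.mpr (by linarith)) hs2
      calc ε * f d ≤ ε * f s := mul_le_mul_of_nonneg_left h2 hε0.le
        _ ≤ (K (t1 - s) - K (t2 - s)) * f s :=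
          mul_le_mul_of_nonneg_right h1.le (hfnn _ (Set.mem_Ioi.mpr hspos))
    have hIntBig : IntegrableOn (fun s => (K (t1 - s) - K (t2 - s)) * f s) (Set.Ioc 0 a) := by
      simpa [sub_mul] using ((key t1 hat1).sub (key t2 hat2) :
        IntegrableOn (fun s => K (t1 - s) * f s - K (t2 - s) * f s) (Set.Ioc 0 a))
    have hsubset : Set.Ioc c d ⊆ Set.Ioc 0 a := Set.Ioc_subset_Ioc hc0.le hda.le
    have hnn : 0 ≤ᵐ[volume.restrict (Set.Ioc 0 a)]
        fun s => (K (t1 - s) - K (t2 - s)) * f s := by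
      filter_upwards [ae_restrict_mem measurableSet_Ioc] with s hs
      have h01 : (0 : ℝ) < t2 - s := by simp [ht2def]; linarith [hs.2]
      have h02 : (0 : ℝ) < t1 - s := by simp [ht1def]; linarith [hs.2]
      exact mul_nonneg
        (sub_nonneg.mpr (hKanti (Set.mem_Ioi.mpr h02) (Set.mem_Ioi.mpr h01)
          (by simp [ht1def, ht2def]; linarith)))
        (hfnn s (Set.mem_Ioi.mpr hs.1))
    have hvol : (volume (Set.Ioc c d)).toReal = m / 4 := by
      rw [Real.volume_Ioc, ENNReal.toReal_ofReal (by linarith)]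
      simp [hcdef, hddef]; ring
    have step1 : ε * f d * (m / 4) ≤ ∫ s in Set.Ioc c d, (K (t1 - s) - K (t2 - s)) * f s := by
      have h := MeasureTheory.setIntegral_ge_of_const_le measurableSet_Ioc
        measure_Ioc_lt_top.ne hlow (hIntBig.mono_set hsubset)
      rw [measureReal_def, hvol, smul_eq_mul] at h; linarith
    have step2 : (∫ s in Set.Ioc c d, (K (t1 - s) - K (t2 - s)) * f s)
        ≤ ∫ s in Set.Ioc 0 a, (K (t1 - s) - K (t2 - s)) * f s :=
      MeasureTheory.setIntegral_mono_set hIntBig hnn (HasSubset.Subset.eventuallyLE hsubset)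
    have hpos : 0 < ∫ s in Set.Ioc 0 a, (K (t1 - s) - K (t2 - s)) * f s :=
      lt_of_lt_of_le (by positivity) (step1.trans step2)
    linarith [hdiff, hpos, e1, e2, hAK]
end

section
/- Let K : (0,∞) → ℝ be locally integrable, completely monotone, nonconstant, and positive almost everywhere, let A ∈ ℝ, and let f : (0,∞) → ℝ be completely monotone and locally integrable such that A·K(t) + ∫_0^t K(t−s) f(s) ds = 1 for every t > 0. Then A ≥ 0, and A = 0 if and only if lim_{t → 0⁺} K(t) = ∞ (the limit exists in (0,∞] by monotonicity of K). -/
open Real MeasureTheory Set Filter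

/-- The primitive of a locally integrable function tends to zero at `0⁺`. -/
lemma aux_tendsto_setIntegral_zero (f : ℝ → ℝ) (hf : IntegrableOn f (Set.Ioc 0 1)) :
    Tendsto (fun t => ∫ u in Set.Ioc (0:ℝ) t, f u) (nhdsWithin 0 (Set.Ioi 0)) (nhds 0) := by
  have hμ : Tendsto (fun t : ℝ => (volume.restrict (Set.Ioc (0:ℝ) 1)) (Set.Ioc (0:ℝ) t))
      (nhdsWithin 0 (Set.Ioi 0)) (nhds 0) := by
    have h1 : ∀ t : ℝ, (volume.restrict (Set.Ioc (0:ℝ) 1)) (Set.Ioc (0:ℝ) t)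
        ≤ ENNReal.ofReal t := by
      intro t
      rw [Measure.restrict_apply measurableSet_Ioc]
      refine le_trans (measure_mono (Set.inter_subset_left)) ?_
      simp [Real.volume_Ioc]
    have h2 : Tendsto (fun t : ℝ => ENNReal.ofReal t) (nhdsWithin 0 (Set.Ioi 0)) (nhds 0) := by
      have h3 : Tendsto (fun t : ℝ => ENNReal.ofReal t) (nhds 0) (nhds 0) := by
        simpa using (ENNReal.continuous_ofReal.tendsto 0)
      exact h3.mono_left nhdsWithin_le_nhds
    exact tendsto_of_tendsto_of_tendsto_of_le_of_le tendsto_const_nhds h2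
      (fun t => zero_le) h1
  have := (hf.tendsto_setIntegral_nhds_zero (l := nhdsWithin 0 (Set.Ioi 0))
      (s := fun t : ℝ => Set.Ioc (0:ℝ) t)) hμ
  refine this.congr' ?_
  filter_upwards [Ioc_mem_nhdsGT_of_mem (Set.mem_Ico.2 ⟨le_refl 0, one_pos⟩)] with t ht
  rw [Measure.restrict_restrict measurableSet_Ioc, Set.Ioc_inter_Ioc]
  simp [ht.2, max_self, min_eq_left ht.2]
/-- If `K` is locally integrable, completely monotone, nonconstant and a.e. positive on
`(0,∞)`, `A ∈ ℝ`, and `f` is completely monotone and locally integrable with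
`A K(t) + ∫₀ᵗ K(t−s) f(s) ds = 1` for all `t > 0` (i.e. `A δ₀ + f` is a resolvent of
the first kind of `K`), then `A ≥ 0`, and `A = 0` iff `K(t) → ∞` as `t → 0⁺`. -/

theorem resolvent_point_mass_nonneg_and_zero_iff
    (K f : ℝ → ℝ)
    (hKloc : ∀ T > (0 : ℝ), IntegrableOn K (Set.Ioc 0 T))
    (hKcm : CompletelyMonotoneOn K)
    (hKnonconst : ∃ s ∈ Set.Ioi (0 : ℝ), ∃ t ∈ Set.Ioi (0 : ℝ), K s ≠ K t)
    (hKpos : ∀ᵐ t : ℝ, t ∈ Set.Ioi (0 : ℝ) → 0 < K t)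
    (A : ℝ)
    (hfcm : CompletelyMonotoneOn f)
    (hfloc : ∀ T > (0 : ℝ), IntegrableOn f (Set.Ioc 0 T))
    (hres : ∀ t > (0 : ℝ), A * K t + ∫ s in (0 : ℝ)..t, K (t - s) * f s = 1) :
    0 ≤ A ∧
      (A = 0 ↔ Filter.Tendsto K (nhdsWithin 0 (Set.Ioi 0)) Filter.atTop) := by
    -- nonnegativity of K and f on (0,∞)
  have hK0 : ∀ u ∈ Set.Ioi (0:ℝ), 0 ≤ K u := by
    intro u hu
    have := hKcm.2 0 u hu
    simpa [iteratedDerivWithin_zero] using this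
  have hf0 : ∀ u ∈ Set.Ioi (0:ℝ), 0 ≤ f u := by
    intro u hu
    have := hfcm.2 0 u hu
    simpa [iteratedDerivWithin_zero] using this
  -- K is antitone on (0,∞)
  have hKanti : AntitoneOn K (Set.Ioi 0) := by
    refine antitoneOn_of_deriv_nonpos (convex_Ioi 0) hKcm.1.continuousOn ?_ ?_
    · rw [interior_Ioi]
      exact hKcm.1.differentiableOn (by simp)
    · intro x hx
      rw [interior_Ioi] at hx
      have h1 := hKcm.2 1 x hx
      rw [iteratedDerivWithin_one] at h1
      rw [← derivWithin_of_isOpen isOpen_Ioi hx]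
      nlinarith [h1]
  -- K is pointwise positive on (0,∞)
  have hKpt : ∀ u ∈ Set.Ioi (0:ℝ), 0 < K u := by
    intro u hu
    have hex : ∃ v, u < v ∧ 0 < K v := by
      by_contra h
      push_neg at h
      have hsub : Set.Ioi u ⊆ {w | ¬ (w ∈ Set.Ioi 0 → 0 < K w)} := by
        intro w hw
        simp only [Set.mem_setOf_eq, Classical.not_imp, not_lt]
        exact ⟨Set.mem_Ioi.2 (lt_trans (Set.mem_Ioi.1 hu) (Set.mem_Ioi.1 hw)), h w hw⟩
      have h0 : volume (Set.Ioi u) = 0 :=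
        measure_mono_null hsub (by simpa [MeasureTheory.ae_iff] using hKpos)
      rw [Real.volume_Ioi] at h0
      simp at h0
    obtain ⟨v, huv, hv⟩ := hex
    exact lt_of_lt_of_le hv (hKanti hu (lt_trans hu huv) huv.le)
  -- the primitive of f tends to 0
  have hIF : Tendsto (fun t => ∫ u in Set.Ioc (0:ℝ) t, f u)
      (nhdsWithin 0 (Set.Ioi 0)) (nhds 0) :=
    aux_tendsto_setIntegral_zero f (hfloc 1 one_pos)
  -- integrability of the convolution integrand whenever A ≠ 0 or generally
  have hconv : ∀ s > (0:ℝ), ¬ IntegrableOn (fun u => K (s - u) * f u) (Set.Ioc 0 s)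
      → A * K s = 1 := by
    intro s hs h
    have h0 : (∫ u in (0:ℝ)..s, K (s - u) * f u) = 0 := by
      rw [intervalIntegral.integral_of_le hs.le]
      exact integral_undef h
    have := hres s hs
    rw [h0] at this
    linarith
  -- a.e. points differ from s
  have hne : ∀ s : ℝ, ∀ᵐ u : ℝ, u ≠ s := by
    intro s
    rw [MeasureTheory.ae_iff]
    have : {u : ℝ | ¬ u ≠ s} = {s} := by ext u; simp
    rw [this]
    exact Real.volume_singleton
  -- Part A : 0 ≤ A
  have hA : 0 ≤ A := by
    by_contra hA
    push_neg at hA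
    -- every convolution integrand is integrable
    have hint : ∀ s > (0:ℝ), IntegrableOn (fun u => K (s - u) * f u) (Set.Ioc 0 s) := by
      intro s hs
      by_contra h
      have h1 := hconv s hs h
      have h2 := hKpt s hs
      nlinarith
    -- key claim : -A ≤ ∫_{(0,t]} f  for every t > 0
    have claim : ∀ t > (0:ℝ), -A ≤ ∫ u in Set.Ioc (0:ℝ) t, f u := by
      intro t ht
      set R : Set ℝ := Set.Ioc (0:ℝ) t with hR
      have hRm : MeasurableSet R := measurableSet_Ioc
      have hKint : IntegrableOn K R := hKloc t ht
      have hfint : IntegrableOn f R := hfloc t ht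
      set IK : ℝ := ∫ u in R, K u with hIKdef
      set IFt : ℝ := ∫ u in R, f u with hIFdef
      have hIKpos : 0 < IK := by
        have hc : IntegrableOn (fun _ : ℝ => K t) R := integrableOn_const (by
          simp [hR, Real.volume_Ioc, ht.le, ENNReal.ofReal_lt_top])
        have hmono : ∫ u in R, K t ∂volume ≤ ∫ u in R, K u := by
          refine setIntegral_mono_on hc hKint hRm ?_
          intro u hu
          exact hKanti hu.1 ht hu.2
        have : ∫ u in R, K t ∂volume = t * K t := by
          rw [setIntegral_const]
          simp [hR, Real.volume_Ioc, ht.le, ENNReal.toReal_ofReal ht.le]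
        nlinarith [hKpt t ht, this ▸ hmono]
      have hIFnn : 0 ≤ IFt := setIntegral_nonneg hRm (fun u hu => hf0 u hu.1)
      -- lintegral versions
      have hLK : ENNReal.ofReal IK = ∫⁻ u in R, ENNReal.ofReal (K u) := by
        refine ofReal_integral_eq_lintegral_ofReal hKint ?_
        exact (ae_restrict_iff' hRm).2 (Filter.Eventually.of_forall (fun u hu => hK0 u hu.1))
      have hLF : ENNReal.ofReal IFt = ∫⁻ u in R, ENNReal.ofReal (f u) := by
        refine ofReal_integral_eq_lintegral_ofReal hfint ?_
        exact (ae_restrict_iff' hRm).2 (Filter.Eventually.of_forall (fun u hu => hf0 u hu.1))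
      -- step 1 : ofReal (-A) * ∫⁻ K ≤ ∫⁻ ofReal (1 - A K s)
      have step1 : ENNReal.ofReal (-A) * ∫⁻ u in R, ENNReal.ofReal (K u)
          ≤ ∫⁻ s in R, ENNReal.ofReal (1 - A * K s) := by
        have e1 : ∫⁻ u in R, ENNReal.ofReal ((-A) * K u)
            = ENNReal.ofReal (-A) * ∫⁻ u in R, ENNReal.ofReal (K u) := by
          simp_rw [ENNReal.ofReal_mul (neg_nonneg.2 hA.le)]
          exact lintegral_const_mul' _ _ ENNReal.ofReal_ne_top
        rw [← e1]
        refine lintegral_mono (fun u => ENNReal.ofReal_le_ofReal (by nlinarith))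
      -- step 2 : rewrite integrand via the resolvent equation
      have step2 : ∫⁻ s in R, ENNReal.ofReal (1 - A * K s)
          = ∫⁻ s in R, ∫⁻ u in Set.Ioc 0 s, ENNReal.ofReal (K (s - u) * f u) := by
        refine setLIntegral_congr_fun hRm (fun s hs => ?_)
        have heq : (1 : ℝ) - A * K s = ∫ u in Set.Ioc 0 s, K (s - u) * f u := by
          have := hres s hs.1
          rw [intervalIntegral.integral_of_le hs.1.le] at this
          linarith
        rw [heq]
        refine ofReal_integral_eq_lintegral_ofReal (hint s hs.1) ?_
        have hnn : ∀ᵐ u ∂(volume.restrict (Set.Ioc (0:ℝ) s)), 0 ≤ K (s - u) * f u := by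
          rw [ae_restrict_iff' measurableSet_Ioc]
          filter_upwards [hne s] with u hu hmem
          have h1 : 0 < s - u := by
            rcases lt_or_eq_of_le hmem.2 with h | h
            · linarith
            · exact absurd h hu
          exact mul_nonneg (hK0 _ h1) (hf0 _ hmem.1)
        exact hnn
      -- the indicator kernel
      set G : ℝ × ℝ → ENNReal := fun p => ENNReal.ofReal (K (p.1 - p.2) * f p.2) with hGdef
      set E' : Set (ℝ × ℝ) := {p : ℝ × ℝ | p.2 < p.1} with hE'def
      have hE'm : MeasurableSet E' := measurableSet_lt measurable_snd measurable_fst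
      set g : ℝ → ℝ → ENNReal := fun s u => Set.indicator E' G (s, u) with hgdef
      have hinner : ∀ s ∈ R, (∫⁻ u in Set.Ioc 0 s, ENNReal.ofReal (K (s - u) * f u))
          = ∫⁻ u in R, g s u := by
        intro s hs
        have h1 : (fun u => g s u)
            = Set.indicator (Set.Iio s) (fun u => ENNReal.ofReal (K (s - u) * f u)) := by
          ext u
          by_cases h : u < s <;>
            simp [hgdef, hGdef, hE'def, Set.indicator_apply, h, Set.mem_Iio]
        rw [h1, lintegral_indicator measurableSet_Iio,
          Measure.restrict_restrict measurableSet_Iio]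
        have h2 : Set.Iio s ∩ R = Set.Ioo 0 s := by
          ext u
          constructor
          · rintro ⟨h3, h4, h5⟩; exact ⟨h4, h3⟩
          · rintro ⟨h3, h4⟩; exact ⟨h4, h3, le_trans h4.le hs.2⟩
        rw [h2, ← Measure.restrict_congr_set Ioo_ae_eq_Ioc]
      have hswap : (∫⁻ s in R, ∫⁻ u in R, g s u) = ∫⁻ u in R, ∫⁻ s in R, g s u := by
        refine lintegral_lintegral_swap ?_
        have huncurry : Function.uncurry g = E'.indicator G := rfl
        rw [huncurry, Measure.prod_restrict, aemeasurable_indicator_iff hE'm,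
          Measure.restrict_restrict hE'm]
        have hcont : ContinuousOn G (E' ∩ R ×ˢ R) := by
          refine ENNReal.continuous_ofReal.comp_continuousOn (ContinuousOn.mul ?_ ?_)
          · refine hKcm.1.continuousOn.comp (continuous_fst.sub continuous_snd).continuousOn ?_
            rintro ⟨s, u⟩ ⟨h1, h2, h3⟩
            exact Set.mem_Ioi.2 (sub_pos.mpr h1)
          · refine hfcm.1.continuousOn.comp continuous_snd.continuousOn ?_
            rintro ⟨s, u⟩ ⟨h1, h2, h3⟩
            exact Set.mem_Ioi.2 h3.1
        exact hcont.aemeasurable (hE'm.inter (hRm.prod hRm))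
      have hinner2 : ∀ u ∈ R, (∫⁻ s in R, g s u)
          ≤ ENNReal.ofReal (f u) * ∫⁻ v in R, ENNReal.ofReal (K v) := by
        intro u hu
        have h1 : (fun s => g s u)
            = Set.indicator (Set.Ioi u) (fun s => ENNReal.ofReal (K (s - u) * f u)) := by
          ext s
          by_cases h : u < s <;>
            simp [hgdef, hGdef, hE'def, Set.indicator_apply, h, Set.mem_Ioi]
        rw [h1, lintegral_indicator measurableSet_Ioi,
          Measure.restrict_restrict measurableSet_Ioi]
        have h2 : Set.Ioi u ∩ R = Set.Ioc u t := by
          ext s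
          constructor
          · rintro ⟨h3, h4, h5⟩; exact ⟨h3, h5⟩
          · rintro ⟨h3, h4⟩; exact ⟨h3, lt_trans hu.1 h3, h4⟩
        rw [h2]
        have h3 : (∫⁻ s in Set.Ioc u t, ENNReal.ofReal (K (s - u) * f u))
            = ∫⁻ s in Set.Ioc u t, ENNReal.ofReal (f u) * ENNReal.ofReal (K (s - u)) := by
          refine setLIntegral_congr_fun measurableSet_Ioc
            (fun s hs => ?_)
          rw [mul_comm (K (s - u)) (f u), ENNReal.ofReal_mul (hf0 u hu.1)]
        rw [h3, lintegral_const_mul' _ _ ENNReal.ofReal_ne_top]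
        refine mul_le_mul_right ?_ _
        have h4 : (∫⁻ s in Set.Ioc u t, ENNReal.ofReal (K (s - u)))
            = ∫⁻ v in Set.Ioc 0 (t - u), ENNReal.ofReal (K v) := by
          have hmp : MeasurePreserving (fun v : ℝ => v + u) volume volume :=
            measurePreserving_add_right volume u
          have hemb : MeasurableEmbedding (fun v : ℝ => v + u) :=
            (Homeomorph.addRight u).measurableEmbedding
          have h5 := hmp.setLIntegral_comp_preimage_emb hemb
            (fun s => ENNReal.ofReal (K (s - u))) (Set.Ioc u t)
          rw [← h5]
          have hpre : (fun v : ℝ => v + u) ⁻¹' Set.Ioc u t = Set.Ioc 0 (t - u) := by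
            ext v
            simp only [Set.mem_preimage, Set.mem_Ioc]
            constructor <;> intro h <;> exact ⟨by linarith [h.1], by linarith [h.2]⟩
          rw [hpre]
          refine setLIntegral_congr_fun measurableSet_Ioc
            (fun v hv => ?_)
          simp
        rw [h4]
        exact lintegral_mono_set (Set.Ioc_subset_Ioc_right (by linarith [hu.1]))
      have main : ENNReal.ofReal (-A) * ENNReal.ofReal IK
          ≤ ENNReal.ofReal IFt * ENNReal.ofReal IK := by
        calc ENNReal.ofReal (-A) * ENNReal.ofReal IK
            = ENNReal.ofReal (-A) * ∫⁻ u in R, ENNReal.ofReal (K u) := by rw [hLK]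
          _ ≤ ∫⁻ s in R, ENNReal.ofReal (1 - A * K s) := step1
          _ = ∫⁻ s in R, ∫⁻ u in Set.Ioc 0 s, ENNReal.ofReal (K (s - u) * f u) := step2
          _ = ∫⁻ s in R, ∫⁻ u in R, g s u :=
              setLIntegral_congr_fun hRm
                (fun s hs => hinner s hs)
          _ = ∫⁻ u in R, ∫⁻ s in R, g s u := hswap
          _ ≤ ∫⁻ u in R, ENNReal.ofReal (f u) * ∫⁻ v in R, ENNReal.ofReal (K v) :=
              lintegral_mono_ae ((ae_restrict_iff' hRm).2
                (Filter.Eventually.of_forall (fun u hu => hinner2 u hu)))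
          _ = (∫⁻ u in R, ENNReal.ofReal (f u)) * ∫⁻ v in R, ENNReal.ofReal (K v) :=
              lintegral_mul_const' _ _ (by rw [← hLK]; exact ENNReal.ofReal_ne_top)
          _ = ENNReal.ofReal IFt * ENNReal.ofReal IK := by rw [hLF, hLK]
      have hne0 : ENNReal.ofReal IK ≠ 0 := (ENNReal.ofReal_pos.2 hIKpos).ne'
      have hfin : ENNReal.ofReal IK ≠ ⊤ := ENNReal.ofReal_ne_top
      have hle := (ENNReal.mul_le_mul_iff_left hne0 hfin).1 main
      have hfin2 := (ENNReal.ofReal_le_ofReal_iff hIFnn).1 hle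
      linarith
    have hle : -A ≤ 0 := by
      refine ge_of_tendsto hIF ?_
      exact eventually_nhdsWithin_of_forall (fun t ht => claim t ht)
    linarith
  refine ⟨hA, ?_, ?_⟩
  · -- A = 0 → K blows up at 0⁺
    intro hA0
    by_contra hT
    rw [Filter.tendsto_atTop] at hT
    push_neg at hT
    obtain ⟨M, hM⟩ := hT
    have hbound : ∀ s ∈ Set.Ioi (0:ℝ), K s ≤ M := by
      intro s hs
      have hIoo : Set.Ioo (0:ℝ) s ∈ nhdsWithin 0 (Set.Ioi 0) :=
        Ioo_mem_nhdsGT_of_mem (Set.mem_Ico.2 ⟨le_refl 0, hs⟩)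
      obtain ⟨x, hx1, hx2⟩ := (hM.and_eventually (eventually_of_mem hIoo (fun x hx => hx))).exists
      exact le_of_lt (lt_of_le_of_lt (hKanti hx2.1 (lt_trans hx2.1 hx2.2) hx2.2.le) hx1)
    -- from the resolvent equation with A = 0 : 1 ≤ M * ∫_{(0,s]} f for all s > 0
    have hone : ∀ s > (0:ℝ), 1 ≤ M * ∫ u in Set.Ioc (0:ℝ) s, f u := by
      intro s hs
      have hint : IntegrableOn (fun u => K (s - u) * f u) (Set.Ioc 0 s) := by
        by_contra h
        have := hconv s hs h
        rw [hA0] at this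
        norm_num at this
      have heq : (∫ u in Set.Ioc (0:ℝ) s, K (s - u) * f u) = 1 := by
        have := hres s hs
        rw [intervalIntegral.integral_of_le hs.le] at this
        rw [hA0] at this
        linarith
      have hmono : (∫ u in Set.Ioc (0:ℝ) s, K (s - u) * f u)
          ≤ ∫ u in Set.Ioc (0:ℝ) s, M * f u := by
        refine integral_mono_ae hint ((hfloc s hs).const_mul M) ?_
        rw [Filter.EventuallyLE, ae_restrict_iff' measurableSet_Ioc]
        filter_upwards [hne s] with u hu hmem
        have h1 : 0 < s - u := by
          rcases lt_or_eq_of_le hmem.2 with h | h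
          · linarith
          · exact absurd h hu
        exact mul_le_mul_of_nonneg_right (hbound _ h1) (hf0 _ hmem.1)
      rw [heq, integral_const_mul] at hmono
      exact hmono
    have htend : Tendsto (fun s => M * ∫ u in Set.Ioc (0:ℝ) s, f u)
        (nhdsWithin 0 (Set.Ioi 0)) (nhds 0) := by
      simpa using hIF.const_mul M
    have : (1:ℝ) ≤ 0 :=
      ge_of_tendsto htend (eventually_nhdsWithin_of_forall (fun s hs => hone s hs))
    linarith
  · -- K blows up at 0⁺ → A = 0
    intro hT
    by_contra hA0
    have hApos : 0 < A := lt_of_le_of_ne hA (Ne.symm hA0)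
    have hKle : ∀ s > (0:ℝ), K s ≤ 1 / A := by
      intro s hs
      have hnn : 0 ≤ ∫ u in (0:ℝ)..s, K (s - u) * f u := by
        rw [intervalIntegral.integral_of_le hs.le]
        refine setIntegral_nonneg_ae measurableSet_Ioc ?_
        filter_upwards [hne s] with u hu hmem
        have h1 : 0 < s - u := by
          rcases lt_or_eq_of_le hmem.2 with h | h
          · linarith
          · exact absurd h hu
        exact mul_nonneg (hK0 _ h1) (hf0 _ hmem.1)
      have := hres s hs
      rw [le_div_iff₀ hApos]
      nlinarith
    have hev : ∀ᶠ s in nhdsWithin (0:ℝ) (Set.Ioi 0), 1 / A + 1 ≤ K s :=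
      hT.eventually_ge_atTop (1 / A + 1)
    obtain ⟨s, hs1, hs2⟩ := (hev.and (eventually_mem_nhdsWithin)).exists
    have := hKle s hs2
    linarith
end
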